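/- arXiv:1602.02826 — 9 statements merged into one kernel-verified Lean document; each statement's English description precedes it below -/
import Mathlib

section
/- In the category of sets, for a coequalizer fork e₀, e₁ : E ⇉ D with coequalizer q : D → Q, if the fork obtained by applying (−)^ℕ is a coequalizer, then finite distances are bounded: there exists n ∈ ℕ such that q x = q y implies d(x,y) ≤ n for all x, y ∈ D. -/
/-! If the `(−)^ℕ` power of a coequalizer fork in `Set` is still a coequalizer, then
finite zig-zag distances are bounded. -/

/-- `q : D → Q` is a coequalizer of `e₀ e₁ : E → D` in the category of sets. -/
def IsSetCoequalizer {E D Q : Type} (e₀ e₁ : E → D) (q : D → Q) : Prop :=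
  (∀ z, q (e₀ z) = q (e₁ z)) ∧
    ∀ {Z : Type} (h : D → Z), (∀ z, h (e₀ z) = h (e₁ z)) → ∃! k : Q → Z, k ∘ q = h

/-- One step of the reflexive-symmetric closure `∼` of the relation
`{(e₀ z, e₁ z) | z ∈ E}` on `D`. -/
def SimStep {E D : Type} (e₀ e₁ : E → D) (x y : D) : Prop :=
  x = y ∨ (∃ z, e₀ z = x ∧ e₁ z = y) ∨ (∃ z, e₀ z = y ∧ e₁ z = x)

/-- There is a zig-zag chain `x = c 0 ∼ c 1 ∼ ⋯ ∼ c n = y` of length at most `n`. -/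
def ChainLE {E D : Type} (e₀ e₁ : E → D) (n : ℕ) (x y : D) : Prop :=
  ∃ c : ℕ → D, c 0 = x ∧ c n = y ∧ ∀ i < n, SimStep e₀ e₁ (c i) (c (i + 1))

lemma simStep_symm {E D : Type} {e₀ e₁ : E → D} {x y : D}
    (h : SimStep e₀ e₁ x y) : SimStep e₀ e₁ y x := by
  rcases h with h | h | h
  · exact Or.inl h.symm
  · exact Or.inr (Or.inr h)
  · exact Or.inr (Or.inl h)

lemma chainLE_refl {E D : Type} (e₀ e₁ : E → D) (x : D) : ChainLE e₀ e₁ 0 x x :=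
  ⟨fun _ => x, rfl, rfl, fun i hi => by omega⟩

lemma chainLE_symm {E D : Type} {e₀ e₁ : E → D} {n : ℕ} {x y : D}
    (h : ChainLE e₀ e₁ n x y) : ChainLE e₀ e₁ n y x := by
  obtain ⟨c, hc0, hcn, hstep⟩ := h
  refine ⟨fun i => c (n - i), by simpa, by simpa, fun i hi => ?_⟩
  have h1 : n - i = (n - (i + 1)) + 1 := by omega
  show SimStep e₀ e₁ (c (n - i)) (c (n - (i + 1)))
  rw [h1]
  exact simStep_symm (hstep (n - (i + 1)) (by omega))

lemma chainLE_trans {E D : Type} {e₀ e₁ : E → D} {m n : ℕ} {x y z : D}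
    (h1 : ChainLE e₀ e₁ m x y) (h2 : ChainLE e₀ e₁ n y z) :
    ChainLE e₀ e₁ (m + n) x z := by
  obtain ⟨c, hc0, hcm, hcs⟩ := h1
  obtain ⟨d, hd0, hdn, hds⟩ := h2
  refine ⟨fun i => if i ≤ m then c i else d (i - m), by simpa, ?_, fun i hi => ?_⟩
  · by_cases h : n = 0
    · subst h
      simp only [Nat.add_zero, le_refl, if_pos, hcm]
      rw [← hd0, hdn]
    · simp only [show ¬ (m + n ≤ m) by omega, if_neg]
      simpa using hdn
  · by_cases h : i + 1 ≤ m
    · simpa [h, show i ≤ m by omega] using hcs i (by omega)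
    · by_cases h' : i ≤ m
      · have him : i = m := by omega
        subst him
        simp only [le_refl, if_pos, if_neg h, show i + 1 - i = 1 by omega]
        have := hds 0 (by omega)
        rwa [hd0, ← hcm] at this
      · simp only [if_neg h, if_neg h']
        have := hds (i - m) (by omega)
        rwa [show i - m + 1 = i + 1 - m by omega] at this

lemma chainLE_mono {E D : Type} {e₀ e₁ : E → D} {m n : ℕ} {x y : D}
    (hmn : m ≤ n) (h : ChainLE e₀ e₁ m x y) : ChainLE e₀ e₁ n x y := by
  obtain ⟨c, hc0, hcm, hcs⟩ := h
  refine ⟨fun i => if i ≤ m then c i else y, by simpa, ?_, fun i hi => ?_⟩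
  · show (if n ≤ m then c n else y) = y
    split_ifs with h
    · rw [show n = m by omega, hcm]
    · rfl
  by_cases h1 : i + 1 ≤ m
  · simpa [h1, show i ≤ m by omega] using hcs i (by omega)
  · by_cases h2 : i ≤ m
    · have : i = m := by omega
      subst this
      simp [h1, hcm, SimStep]
    · simp [h1, h2, SimStep]

lemma eqvGen_of_coeq {E D Q : Type} {e₀ e₁ : E → D} {q : D → Q}
    (hq : IsSetCoequalizer e₀ e₁ q) {x y : D} (h : q x = q y) :
    Relation.EqvGen (fun a b => ∃ z, e₀ z = a ∧ e₁ z = b) x y := by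
  set R := fun a b => ∃ z, e₀ z = a ∧ e₁ z = b with hR
  obtain ⟨k, hk, -⟩ := hq.2 (Quot.mk R) (fun z => Quot.sound ⟨z, rfl, rfl⟩)
  have hx := congrFun hk x
  have hy := congrFun hk y
  simp only [Function.comp_apply] at hx hy
  exact Quot.eqvGen_exact (hx ▸ hy ▸ (h ▸ rfl : k (q x) = k (q y)))

lemma chainLE_of_eqvGen {E D : Type} {e₀ e₁ : E → D} {x y : D}
    (h : Relation.EqvGen (fun a b => ∃ z, e₀ z = a ∧ e₁ z = b) x y) :
    ∃ n, ChainLE e₀ e₁ n x y := by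
  induction h with
  | rel a b hab =>
      exact ⟨1, fun i => if i = 0 then a else b, rfl, rfl,
        fun i hi => by interval_cases i; simp [SimStep, Or.inr (Or.inl hab)]⟩
  | refl a => exact ⟨0, chainLE_refl e₀ e₁ a⟩
  | symm a b _ ih => obtain ⟨n, hn⟩ := ih; exact ⟨n, chainLE_symm hn⟩
  | trans a b c _ _ ih1 ih2 =>
      obtain ⟨m, hm⟩ := ih1; obtain ⟨n, hn⟩ := ih2
      exact ⟨m + n, chainLE_trans hm hn⟩

/-- if the fork obtained by applying `(−)^ℕ` is a coequalizer, then
finite distances are bounded. -/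
theorem stmt1 {E D Q : Type} (e₀ e₁ : E → D) (q : D → Q)
    (hq : IsSetCoequalizer e₀ e₁ q)
    (hN : IsSetCoequalizer (fun h : ℕ → E => e₀ ∘ h) (fun h : ℕ → E => e₁ ∘ h)
      (fun h : ℕ → D => q ∘ h)) :
    ∃ n : ℕ, ∀ x y : D, q x = q y → ChainLE e₀ e₁ n x y := by
  by_contra hcon
  push_neg at hcon
  choose X Y hXY hnc using hcon
  have hqXY : (fun h : ℕ → D => q ∘ h) X = (fun h : ℕ → D => q ∘ h) Y := by
    funext n; exact hXY n
  obtain ⟨m, hm⟩ := chainLE_of_eqvGen (eqvGen_of_coeq hN hqXY)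
  -- project the chain of sequences to component m
  apply hnc m
  obtain ⟨c, hc0, hcm, hcs⟩ := hm
  refine ⟨fun i => c i m, congrFun hc0 m, congrFun hcm m, fun i hi => ?_⟩
  rcases hcs i hi with h | ⟨z, hz0, hz1⟩ | ⟨z, hz0, hz1⟩
  · exact Or.inl (congrFun h m)
  · exact Or.inr (Or.inl ⟨z m, congrFun hz0 m, congrFun hz1 m⟩)
  · exact Or.inr (Or.inr ⟨z m, congrFun hz0 m, congrFun hz1 m⟩)
end

section
/- Let A : C → Set be a flat (filtering) functor from a small category C. Define the interior of A C as the set of x ∈ A C such that whenever u : C' → C in C and y ∈ A C' satisfy A u y = x, the morphism u is a split epimorphism. If the interior of A C is nonempty for every object C, then the colimit-extension functor Lan_y A : Psh(C) → Set (the inverse image of the geometric morphism induced by A) is faithful, equivalently reflects epimorphisms. -/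
/-! A flat (filtering) functor `A : C ⥤ Type` whose values all have nonempty interior induces a
surjective geometric morphism `Set → Psh(C)`, i.e. the left Kan extension of `A` along the
Yoneda embedding (the inverse image) is faithful. -/

open CategoryTheory

universe u

/-- The interior of `A.obj c`: those `x` such that any morphism `u : c' ⟶ c` through whose
image `x` factors is a split epimorphism. -/
def interiorSet {C : Type u} [SmallCategory C] (A : C ⥤ Type u) (c : C) : Set (A.obj c) :=
  {x | ∀ (c' : C) (u : c' ⟶ c) (y : A.obj c'), A.map u y = x → IsSplitEpi u}

section Aux

open CategoryTheory.Limits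

variable {C : Type u} [SmallCategory C] (A : C ⥤ Type u)

/-- The "coend" model of the left Kan extension: `Q ↦ colim_{(c,a) ∈ El(A)ᵒᵖ} Q c`. -/
noncomputable def myL0 : (Cᵒᵖ ⥤ Type u) ⥤ Type u :=
  (Functor.whiskeringLeft A.Elementsᵒᵖ Cᵒᵖ (Type u)).obj (CategoryOfElements.π A).op ⋙ colim

/-- The unit `A ⟶ yoneda ⋙ myL0 A`. -/
noncomputable def myUnit : A ⟶ yoneda ⋙ myL0 A where
  app c := TypeCat.ofHom fun a =>
    colimit.ι ((CategoryOfElements.π A).op ⋙ yoneda.obj c) (Opposite.op ⟨c, a⟩) (𝟙 c)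
  naturality c c' h := by
    ext a
    let hm : A.elementsMk c a ⟶ A.elementsMk c' (A.map h a) :=
      CategoryOfElements.homMk _ _ h rfl
    have hw := ConcreteCategory.congr_hom (colimit.w ((CategoryOfElements.π A).op ⋙ yoneda.obj c') hm.op) (𝟙 c')
    dsimp [myL0] at hw ⊢
    have hc := ConcreteCategory.congr_hom (ι_colimMap (Functor.whiskerLeft (CategoryOfElements.π A).op (yoneda.map h))
      (Opposite.op (⟨c, a⟩ : A.Elements))) (𝟙 c)
    dsimp at hc
    refine hw.symm.trans (Eq.trans ?_ hc.symm)
    simp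
    exact congrArg (colimit.ι ((CategoryOfElements.π A).op ⋙ yoneda.obj c') (Opposite.op ⟨c, a⟩))
      ((Category.comp_id h).trans (Category.id_comp h).symm)

lemma myUnit_app (c : C) (a : A.obj c) :
    (myUnit A).app c a =
      colimit.ι ((CategoryOfElements.π A).op ⋙ yoneda.obj c) (Opposite.op ⟨c, a⟩) (𝟙 c) := rfl

lemma myL0_map_unit {c : C} (a : A.obj c) (Q : Cᵒᵖ ⥤ Type u) (η : yoneda.obj c ⟶ Q) :
    (myL0 A).map η ((myUnit A).app c a) =
      colimit.ι ((CategoryOfElements.π A).op ⋙ Q) (Opposite.op ⟨c, a⟩)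
        (η.app (Opposite.op c) (𝟙 c)) := by
  have hc := ConcreteCategory.congr_hom (ι_colimMap (Functor.whiskerLeft (CategoryOfElements.π A).op η)
    (Opposite.op (⟨c, a⟩ : A.Elements))) (𝟙 c)
  dsimp [myL0, myUnit] at hc ⊢
  exact hc

end Aux

/-- if `A` is flat (filtering, i.e. its category of elements is cofiltered) and
every `A.obj c` has nonempty interior, then the left Kan extension of `A` along Yoneda
(the inverse image of the induced geometric morphism `Set → Psh(C)`) is faithful,
equivalently reflects epimorphisms; equivalently, the geometric morphism is surjective. -/
theorem stmt2 {C : Type u} [SmallCategory C] (A : C ⥤ Type u)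
    (hflat : IsCofiltered A.Elements)
    (hint : ∀ c : C, (interiorSet A c).Nonempty)
    (L : (Cᵒᵖ ⥤ Type u) ⥤ Type u) (α : A ⟶ yoneda ⋙ L) [L.IsLeftKanExtension α] :
    L.Faithful := by
  haveI := hflat
  open CategoryTheory.Limits in
  constructor
  intro P Q f g h
  let t : L ⟶ myL0 A := L.descOfIsLeftKanExtension α (myL0 A) (myUnit A)
  have hfac : ∀ (c : C) (a : A.obj c),
      t.app (yoneda.obj c) (α.app c a) = (myUnit A).app c a := by
    intro c a
    exact ConcreteCategory.congr_hom (L.descOfIsLeftKanExtension_fac_app α (myL0 A) (myUnit A) c) a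
  ext cop x
  obtain ⟨c⟩ := cop
  obtain ⟨a, ha⟩ := hint c
  -- the two elements of the colimit model
  have hstep : ∀ (φ : P ⟶ Q),
      t.app Q (L.map (yonedaEquiv.symm x ≫ φ) (α.app c a)) =
        colimit.ι ((CategoryOfElements.π A).op ⋙ Q) (Opposite.op (A.elementsMk c a))
          (φ.app (Opposite.op c) x) := by
    intro φ
    have hnat := ConcreteCategory.congr_hom (t.naturality (yonedaEquiv.symm x ≫ φ)) (α.app c a)
    dsimp at hnat
    rw [hnat, hfac, myL0_map_unit]
    dsimp
    simp
    rfl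
  have key : colimit.ι ((CategoryOfElements.π A).op ⋙ Q) (Opposite.op (A.elementsMk c a))
        (f.app (Opposite.op c) x) =
      colimit.ι ((CategoryOfElements.π A).op ⋙ Q) (Opposite.op (A.elementsMk c a))
        (g.app (Opposite.op c) x) := by
    rw [← hstep f, ← hstep g]
    rw [Functor.map_comp, Functor.map_comp, h]
  obtain ⟨k, u, v, huv⟩ :=
    (Types.FilteredColimit.colimit_eq_iff ((CategoryOfElements.π A).op ⋙ Q)).mp key
  -- coequalize u and v
  let w := IsFiltered.coeqHom u v
  have hm : ((CategoryOfElements.π A).op ⋙ Q).map (u ≫ w) (f.app (Opposite.op c) x) =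
      ((CategoryOfElements.π A).op ⋙ Q).map (u ≫ w) (g.app (Opposite.op c) x) := by
    exact (Functor.map_comp_apply _ u w _).trans ((congrArg (((CategoryOfElements.π A).op ⋙ Q).map w) huv).trans
      ((Functor.map_comp_apply _ v w _).symm.trans
        (congrArg (fun (m : Opposite.op (A.elementsMk c a) ⟶ IsFiltered.coeq u v) => ((CategoryOfElements.π A).op ⋙ Q).map m (g.app (Opposite.op c) x))
          (IsFiltered.coeq_condition u v).symm)))
  set m := u ≫ w with hmdef
  let p := m.unop
  haveI hse : IsSplitEpi p.val := ha _ p.val _ p.property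
  have hid : section_ p.val ≫ p.val = 𝟙 c := IsSplitEpi.id p.val
  have hD : ∀ z : Q.obj (Opposite.op c),
      ((CategoryOfElements.π A).op ⋙ Q).map m z = Q.map p.val.op z := fun z => rfl
  have hf : f.app (Opposite.op c) x =
      Q.map (section_ p.val).op (Q.map p.val.op (f.app (Opposite.op c) x)) := by
    rw [← FunctorToTypes.map_comp_apply, ← op_comp, hid]
    simp
  have hg : g.app (Opposite.op c) x =
      Q.map (section_ p.val).op (Q.map p.val.op (g.app (Opposite.op c) x)) := by
    rw [← FunctorToTypes.map_comp_apply, ← op_comp, hid]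
    simp
  change f.app (Opposite.op c) x = g.app (Opposite.op c) x
  rw [hf, hg, ← hD, ← hD, hm]
end

section
/- Let A : C → Set be a flat functor on a small category C in which every morphism factors as a split epimorphism followed by a monomorphism. Then for each object C, the interior of A C (elements x such that any u : C' → C with x in the image of A u is split epi) equals the set of x ∈ A C such that for every monomorphism m : C' → C, if x lies in the image of A m then m is an isomorphism. -/
/-! Characterization of the interior of the values of a flat functor `A : C ⥤ Type` when every
morphism of `C` factors as a split epi followed by a mono. -/

open CategoryTheory

universe u

/-- if `A : C ⥤ Type` is flat and every morphism of `C` factors as a split epi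
followed by a mono, then the interior of `A.obj c` consists exactly of those `x` such that
every mono `m : c' ⟶ c` through whose image `x` factors is an isomorphism. -/
theorem stmt3 {C : Type u} [SmallCategory C] (A : C ⥤ Type u)
    (hflat : IsCofiltered A.Elements)
    (hfact : ∀ {c d : C} (f : c ⟶ d), ∃ (e : C) (s : c ⟶ e) (m : e ⟶ d),
      IsSplitEpi s ∧ Mono m ∧ s ≫ m = f)
    (c : C) :
    interiorSet A c =
      {x | ∀ (c' : C) (m : c' ⟶ c), Mono m → (∃ y : A.obj c', A.map m y = x) → IsIso m} := by
  ext x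
  constructor
  · intro hx c' m hm ⟨y, hy⟩
    have hse : IsSplitEpi m := hx c' m y hy
    exact isIso_of_mono_of_isSplitEpi m
  · intro hx c' u y hy
    obtain ⟨e, s, m, hs, hm, hsm⟩ := hfact u
    have hiso : IsIso m := by
      refine hx e m hm ⟨A.map s y, ?_⟩
      rw [← FunctorToTypes.map_comp_apply, hsm, hy]
    refine ⟨⟨⟨inv m ≫ section_ s, ?_⟩⟩⟩
    rw [← hsm]
    simp [IsSplitEpi.id]
end

section
/- Let p* ⊣ p_* : E → S and g* ⊣ g_* : F → E be adjunctions with composite f* = g* p*, f_* = p_* g_*, and suppose p* and f* have left adjoints p_! and f_!. Define ϱ : f_! g* → p_! as the composite f_! g* σ followed by the counit of f_! ⊣ f* applied to p_! (where σ is the unit of p_! ⊣ p*). Then the following are equivalent: (1) the canonical natural transformation ν_{p*} : p* → g_* g* p* (whiskering of the unit of g* ⊣ g_*) is an isomorphism; (2) ϱ is an isomorphism; (3) there exists a natural transformation ρ : p_! → f_! g* such that (f* ρ) ∘ (g* σ) equals the unit of f_! ⊣ f* whiskered with g*, and the counit of f_! ⊣ f* whiskered appropriately composed with ρ_{p*}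 equals the counit τ of p_! ⊣ p*. Moreover in that case ρ is inverse to ϱ. -/
/-! Characterizations of when the direct image `g_*` preserves `S`-indexed coproducts, in terms
of the mate `ϱ : f_! g^* ⟶ p_!`. -/

open CategoryTheory

universe v₁ v₂ v₃ u₁ u₂ u₃

/-- Given adjunctions `p^* ⊣ p_* : E → S`, `g^* ⊣ g_* : F → E` with composite
`f^* = g^* p^*`, `f_* = p_* g_*`, and pieces functors `p_! ⊣ p^*`, `f_! ⊣ f^*`, with
`ϱ : f_! g^* ⟶ p_!` the mate of the whiskered unit `ν_{p^*}` (given componentwise by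
`f_!(g^* σ)` followed by the counit `τ̄` of `f_! ⊣ f^*`), the following are equivalent:
(1) `ν_{p^*} : p^* ⟶ g_* g^* p^*` is an isomorphism (i.e. `g_*` preserves `S`-indexed
coproducts); (2) `ϱ` is an isomorphism; (3) there exists `ρ : p_! ⟶ f_! g^*` making the two
triangles of the statement commute. Moreover any such `ρ` is inverse to `ϱ`. -/
theorem stmt6 {S : Type u₁} {E : Type u₂} {F : Type u₃}
    [Category.{v₁} S] [Category.{v₂} E] [Category.{v₃} F]
    (pStar : S ⥤ E) (pLow : E ⥤ S) (adjP : pStar ⊣ pLow)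
    (gStar : E ⥤ F) (gLow : F ⥤ E) (adjG : gStar ⊣ gLow)
    (pShrek : E ⥤ S) (adjPs : pShrek ⊣ pStar)
    (fShrek : F ⥤ S) (adjFs : fShrek ⊣ pStar ⋙ gStar)
    (varrho : gStar ⋙ fShrek ⟶ pShrek)
    (hvarrho : ∀ X : E, varrho.app X =
      fShrek.map (gStar.map (adjPs.unit.app X)) ≫ adjFs.counit.app (pShrek.obj X)) :
    ((∀ A : S, IsIso (adjG.unit.app (pStar.obj A))) ↔ IsIso varrho) ∧
    (IsIso varrho ↔ ∃ ρ : pShrek ⟶ gStar ⋙ fShrek,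
      (∀ X : E, gStar.map (adjPs.unit.app X) ≫ gStar.map (pStar.map (ρ.app X)) =
        adjFs.unit.app (gStar.obj X)) ∧
      (∀ A : S, ρ.app (pStar.obj A) ≫ adjFs.counit.app A = adjPs.counit.app A)) ∧
    (∀ ρ : pShrek ⟶ gStar ⋙ fShrek,
      (∀ X : E, gStar.map (adjPs.unit.app X) ≫ gStar.map (pStar.map (ρ.app X)) =
        adjFs.unit.app (gStar.obj X)) →
      (∀ A : S, ρ.app (pStar.obj A) ≫ adjFs.counit.app A = adjPs.counit.app A) →
      varrho ≫ ρ = 𝟙 (gStar ⋙ fShrek) ∧ ρ ≫ varrho = 𝟙 pShrek) := by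
  have keyA : ∀ X : E, adjFs.unit.app (gStar.obj X) ≫
      gStar.map (pStar.map (varrho.app X)) = gStar.map (adjPs.unit.app X) := by
    intro X
    have n := adjFs.unit.naturality (gStar.map (adjPs.unit.app X))
    have t := adjFs.right_triangle_components (pShrek.obj X)
    simp only [Functor.comp_obj, Functor.comp_map, Functor.id_obj, Functor.id_map] at n t
    rw [hvarrho X, Functor.map_comp, Functor.map_comp, ← Category.assoc, ← n,
      Category.assoc, t, Category.comp_id]
  have keyB : ∀ A : S, varrho.app (pStar.obj A) ≫ adjPs.counit.app A = adjFs.counit.app A := by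
    intro A
    have n := adjFs.counit.naturality (adjPs.counit.app A)
    simp only [Functor.comp_obj, Functor.comp_map, Functor.id_obj, Functor.id_map] at n
    rw [hvarrho, Category.assoc, ← n, ← Category.assoc, ← Functor.map_comp, ← Functor.map_comp,
      adjPs.right_triangle_components]
    simp
  have partC : ∀ ρ : pShrek ⟶ gStar ⋙ fShrek,
    (∀ X : E, gStar.map (adjPs.unit.app X) ≫ gStar.map (pStar.map (ρ.app X)) =
      adjFs.unit.app (gStar.obj X)) →
    (∀ A : S, ρ.app (pStar.obj A) ≫ adjFs.counit.app A = adjPs.counit.app A) →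
    varrho ≫ ρ = 𝟙 (gStar ⋙ fShrek) ∧ ρ ≫ varrho = 𝟙 pShrek := by
    intro ρ hT1 hT2
    constructor
    · ext X
      simp only [NatTrans.comp_app, NatTrans.id_app]
      apply (adjFs.homEquiv (gStar.obj X) _).injective
      rw [Adjunction.homEquiv_unit, Adjunction.homEquiv_unit]
      simp only [Functor.comp_obj, Functor.comp_map, Functor.map_comp, CategoryTheory.Functor.map_id,
        Category.comp_id]
      rw [← Category.assoc, keyA X, hT1 X]
    · ext X
      simp only [NatTrans.comp_app, NatTrans.id_app]
      have n := ρ.naturality (adjPs.unit.app X)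
      simp only [Functor.comp_obj, Functor.comp_map, Functor.id_obj] at n
      rw [hvarrho X, ← Category.assoc, ← n, Category.assoc, hT2 (pShrek.obj X),
        adjPs.left_triangle_components]
  have invT1 : ∀ (_ : IsIso varrho) (X : E),
      gStar.map (adjPs.unit.app X) ≫ gStar.map (pStar.map ((inv varrho).app X)) =
        adjFs.unit.app (gStar.obj X) := by
    intro h X
    haveI := h
    rw [NatIso.isIso_inv_app, ← keyA X, Category.assoc, ← Functor.map_comp, ← Functor.map_comp,
      IsIso.hom_inv_id]
    simp
  have invT2 : ∀ (_ : IsIso varrho) (A : S),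
      (inv varrho).app (pStar.obj A) ≫ adjFs.counit.app A = adjPs.counit.app A := by
    intro h A
    haveI := h
    rw [NatIso.isIso_inv_app, ← keyB A, ← Category.assoc, IsIso.inv_hom_id, Category.id_comp]
  have partA1 : (∀ A : S, IsIso (adjG.unit.app (pStar.obj A))) → IsIso varrho := by
    intro h
    haveI : ∀ X : E, IsIso (varrho.app X) := by
      intro X
      haveI := h (fShrek.obj (gStar.obj X))
      -- b : X ⟶ pStar.obj (fShrek.obj (gStar.obj X))
      have key0 : adjPs.unit.app X ≫ pStar.map (pShrek.map (adjG.unit.app X ≫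
            gLow.map (adjFs.unit.app (gStar.obj X)) ≫
            inv (adjG.unit.app (pStar.obj (fShrek.obj (gStar.obj X))))) ≫
            adjPs.counit.app (fShrek.obj (gStar.obj X))) =
          adjG.unit.app X ≫ gLow.map (adjFs.unit.app (gStar.obj X)) ≫
            inv (adjG.unit.app (pStar.obj (fShrek.obj (gStar.obj X)))) := by
        have n := adjPs.unit.naturality (adjG.unit.app X ≫
          gLow.map (adjFs.unit.app (gStar.obj X)) ≫
          inv (adjG.unit.app (pStar.obj (fShrek.obj (gStar.obj X)))))
        simp only [Functor.comp_obj, Functor.comp_map, Functor.id_obj, Functor.id_map] at n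
        rw [Functor.map_comp, ← Category.assoc, ← n, Category.assoc,
          adjPs.right_triangle_components, Category.comp_id]
      have hbnu : (adjG.unit.app X ≫ gLow.map (adjFs.unit.app (gStar.obj X)) ≫
            inv (adjG.unit.app (pStar.obj (fShrek.obj (gStar.obj X))))) ≫
            adjG.unit.app (pStar.obj (fShrek.obj (gStar.obj X))) =
          adjG.unit.app X ≫ gLow.map (adjFs.unit.app (gStar.obj X)) := by
        simp
      have hgb : gStar.map (adjG.unit.app X ≫ gLow.map (adjFs.unit.app (gStar.obj X)) ≫
            inv (adjG.unit.app (pStar.obj (fShrek.obj (gStar.obj X))))) =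
          adjFs.unit.app (gStar.obj X) := by
        apply (adjG.homEquiv X _).injective
        rw [Adjunction.homEquiv_unit, Adjunction.homEquiv_unit]
        have n := adjG.unit.naturality (adjG.unit.app X ≫
          gLow.map (adjFs.unit.app (gStar.obj X)) ≫
          inv (adjG.unit.app (pStar.obj (fShrek.obj (gStar.obj X)))))
        simp only [Functor.comp_obj, Functor.comp_map, Functor.id_obj, Functor.id_map] at n
        rw [← n, hbnu]
      have e1 : varrho.app X ≫ (pShrek.map (adjG.unit.app X ≫
            gLow.map (adjFs.unit.app (gStar.obj X)) ≫
            inv (adjG.unit.app (pStar.obj (fShrek.obj (gStar.obj X))))) ≫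
            adjPs.counit.app (fShrek.obj (gStar.obj X))) = 𝟙 _ := by
        apply (adjFs.homEquiv (gStar.obj X) _).injective
        rw [Adjunction.homEquiv_unit, Adjunction.homEquiv_unit]
        simp only [Functor.comp_obj, Functor.comp_map, Functor.id_obj, CategoryTheory.Functor.map_id,
          Category.comp_id]
        rw [Functor.map_comp, Functor.map_comp, ← Category.assoc, keyA X,
          ← Functor.map_comp, key0, hgb]
      have e2 : (pShrek.map (adjG.unit.app X ≫
            gLow.map (adjFs.unit.app (gStar.obj X)) ≫
            inv (adjG.unit.app (pStar.obj (fShrek.obj (gStar.obj X))))) ≫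
            adjPs.counit.app (fShrek.obj (gStar.obj X))) ≫ varrho.app X = 𝟙 _ := by
        apply (adjPs.homEquiv X _).injective
        rw [Adjunction.homEquiv_unit, Adjunction.homEquiv_unit]
        simp only [Functor.id_obj, CategoryTheory.Functor.map_id, Category.comp_id]
        rw [Functor.map_comp, ← Category.assoc, key0]
        haveI := h (pShrek.obj X)
        rw [← cancel_mono (adjG.unit.app (pStar.obj (pShrek.obj X)))]
        have n1 := adjG.unit.naturality (pStar.map (varrho.app X))
        have n2 := adjG.unit.naturality (adjPs.unit.app X)
        simp only [Functor.comp_obj, Functor.comp_map, Functor.id_obj, Functor.id_map] at n1 n2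
        rw [Category.assoc, n1, ← Category.assoc, hbnu, Category.assoc, ← Functor.map_comp,
          keyA X]
        erw [Category.comp_id]
        rw [n2]
      exact ⟨_, e1, e2⟩
    exact NatIso.isIso_of_isIso_app varrho
  have partA2 : IsIso varrho → ∀ A : S, IsIso (adjG.unit.app (pStar.obj A)) := by
    intro h A
    haveI := h
    have n := adjPs.unit.naturality (adjG.unit.app (pStar.obj A))
    have n2 := (inv varrho).naturality (adjG.unit.app (pStar.obj A))
    simp only [Functor.comp_obj, Functor.comp_map, Functor.id_obj, Functor.id_map] at n n2
    have harg : pShrek.map (adjG.unit.app (pStar.obj A)) ≫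
        (inv varrho).app (gLow.obj (gStar.obj (pStar.obj A))) ≫
        fShrek.map (adjG.counit.app (gStar.obj (pStar.obj A))) ≫ adjFs.counit.app A =
        adjPs.counit.app A := by
      rw [← Category.assoc, n2, Category.assoc]
      slice_lhs 2 3 => rw [← Functor.map_comp, adjG.left_triangle_components, CategoryTheory.Functor.map_id]
      rw [Category.id_comp, invT2 h A]
    have h1 : adjG.unit.app (pStar.obj A) ≫
        (adjPs.unit.app (gLow.obj (gStar.obj (pStar.obj A))) ≫
        pStar.map ((inv varrho).app (gLow.obj (gStar.obj (pStar.obj A))) ≫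
          fShrek.map (adjG.counit.app (gStar.obj (pStar.obj A))) ≫ adjFs.counit.app A)) =
        𝟙 (pStar.obj A) := by
      rw [← Category.assoc, n, Category.assoc, ← Functor.map_comp, harg,
        adjPs.right_triangle_components]
    have inner : gStar.map (adjPs.unit.app (gLow.obj (gStar.obj (pStar.obj A)))) ≫
        gStar.map (pStar.map ((inv varrho).app (gLow.obj (gStar.obj (pStar.obj A))) ≫
          fShrek.map (adjG.counit.app (gStar.obj (pStar.obj A))) ≫ adjFs.counit.app A)) =
        adjG.counit.app (gStar.obj (pStar.obj A)) := by
      have n4 := adjFs.unit.naturality (adjG.counit.app (gStar.obj (pStar.obj A)))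
      have t := adjFs.right_triangle_components A
      simp only [Functor.comp_obj, Functor.comp_map, Functor.id_obj, Functor.id_map] at n4 t
      rw [Functor.map_comp, Functor.map_comp, ← Category.assoc,
        invT1 h (gLow.obj (gStar.obj (pStar.obj A))), Functor.map_comp, Functor.map_comp,
        ← Category.assoc, ← n4, Category.assoc, t, Category.comp_id]
    have h2 : (adjPs.unit.app (gLow.obj (gStar.obj (pStar.obj A))) ≫
        pStar.map ((inv varrho).app (gLow.obj (gStar.obj (pStar.obj A))) ≫
          fShrek.map (adjG.counit.app (gStar.obj (pStar.obj A))) ≫ adjFs.counit.app A)) ≫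
        adjG.unit.app (pStar.obj A) = 𝟙 (gLow.obj (gStar.obj (pStar.obj A))) := by
      have n1 := adjG.unit.naturality (pStar.map
        ((inv varrho).app (gLow.obj (gStar.obj (pStar.obj A))) ≫
          fShrek.map (adjG.counit.app (gStar.obj (pStar.obj A))) ≫ adjFs.counit.app A))
      have n3 := adjG.unit.naturality (adjPs.unit.app (gLow.obj (gStar.obj (pStar.obj A))))
      simp only [Functor.comp_obj, Functor.comp_map, Functor.id_obj, Functor.id_map] at n1 n3
      rw [Category.assoc, n1, ← Category.assoc, n3, Category.assoc, ← Functor.map_comp,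
        inner, adjG.right_triangle_components]
    exact ⟨_, h1, h2⟩
  refine ⟨⟨partA1, partA2⟩, ⟨?_, ?_⟩, partC⟩
  · intro h
    haveI := h
    exact ⟨inv varrho, invT1 h, invT2 h⟩
  · rintro ⟨ρ, t1, t2⟩
    obtain ⟨e1, e2⟩ := partC ρ t1 t2
    exact ⟨ρ, e1, e2⟩
end

section
/- With the same setup of adjunctions p, g, f (f = p∘g) and with pieces functors p_! ⊣ p* and f_! ⊣ f*: if the canonical ϱ : f_! g* → p_! is an isomorphism (i.e., g_* preserves S-indexed coproducts) and f_! inverts the counit ξ of g (i.e., f_! ξ : f_! g* g_* → f_! is an isomorphism), then p_! inverts the unit ν of g, i.e., p_! ν : p_! → p_! g_* g* is an isomorphism. -/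
/-! If `g_*` preserves `S`-indexed coproducts (`ϱ` iso) and `f_!` inverts the counit of `g`,
then `p_!` inverts the unit of `g`. -/

open CategoryTheory

universe v₁ v₂ v₃ u₁ u₂ u₃

/-- in the setting of adjunctions `p^* ⊣ p_*`, `g^* ⊣ g_*`, `p_! ⊣ p^*`,
`f_! ⊣ f^* = g^* p^*` with `ϱ : f_! g^* ⟶ p_!` the canonical mate, if `ϱ` is an isomorphism
and `f_! ξ : f_! g^* g_* ⟶ f_!` is an isomorphism (where `ξ` is the counit of `g^* ⊣ g_*`),
then `p_! ν : p_! ⟶ p_! g_* g^*` is an isomorphism (`ν` the unit of `g^* ⊣ g_*`). -/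
theorem stmt7 {S : Type u₁} {E : Type u₂} {F : Type u₃}
    [Category.{v₁} S] [Category.{v₂} E] [Category.{v₃} F]
    (pStar : S ⥤ E) (pLow : E ⥤ S) (adjP : pStar ⊣ pLow)
    (gStar : E ⥤ F) (gLow : F ⥤ E) (adjG : gStar ⊣ gLow)
    (pShrek : E ⥤ S) (adjPs : pShrek ⊣ pStar)
    (fShrek : F ⥤ S) (adjFs : fShrek ⊣ pStar ⋙ gStar)
    (varrho : gStar ⋙ fShrek ⟶ pShrek)
    (hvarrho : ∀ X : E, varrho.app X =
      fShrek.map (gStar.map (adjPs.unit.app X)) ≫ adjFs.counit.app (pShrek.obj X))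
    (hrho : IsIso varrho)
    (hxi : ∀ Y : F, IsIso (fShrek.map (adjG.counit.app Y))) :
    ∀ X : E, IsIso (pShrek.map (adjG.unit.app X)) := by
  intro X
  have htri : fShrek.map (gStar.map (adjG.unit.app X)) ≫
      fShrek.map (adjG.counit.app (gStar.obj X)) = 𝟙 _ := by
    rw [← fShrek.map_comp]; erw [adjG.left_triangle_components]
    exact fShrek.map_id _
  have h1 : IsIso (fShrek.map (gStar.map (adjG.unit.app X))) := by
    have := hxi (gStar.obj X)
    have : IsIso (fShrek.map (gStar.map (adjG.unit.app X)) ≫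
        fShrek.map (adjG.counit.app (gStar.obj X))) := by rw [htri]; infer_instance
    exact IsIso.of_isIso_comp_right _ (fShrek.map (adjG.counit.app (gStar.obj X)))
  have hnat := varrho.naturality (adjG.unit.app X)
  have h3 : IsIso ((gStar ⋙ fShrek).map (adjG.unit.app X) ≫
      varrho.app ((gStar ⋙ gLow).obj X)) := by
    have h2 : IsIso ((gStar ⋙ fShrek).map (adjG.unit.app X)) := h1
    infer_instance
  rw [hnat] at h3
  exact IsIso.of_isIso_comp_left (varrho.app ((𝟭 E).obj X)) _
end

section
/- Let C be a small category with a terminal object, such that every object has a point (a morphism from the terminal object), so the canonical geometric morphism p : Psh(C) → Set is pre-cohesive. Let g : F → Psh(C) be a geometric morphism. If for every object C of C, the object g*(C(−,C)) of F is indecomposable (its hom-functor preserves coproducts), then g_* : F → Psh(C) preserves Set-indexed coproducts. -/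
/-! If the inverse image of a geometric morphism `g : F → Psh(C)` sends every representable to
an indecomposable object, then `g_*` preserves `Set`-indexed coproducts. -/

open CategoryTheory Limits

universe w u

/-- let `C` be a small category with a terminal object such that every object has
a point (so that `Psh(C) → Set` is pre-cohesive), and let `g : F → Psh(C)` be a geometric
morphism (an adjunction `g^* ⊣ g_*` with finite-limit preserving `g^*`). If every
`g^*(C(−,c))` is indecomposable (its hom functor preserves coproducts), then `g_*` preserves
`Set`-indexed coproducts. -/
theorem stmt8 {C : Type u} [SmallCategory C] [HasTerminal C]
    (hpoints : ∀ c : C, Nonempty ((⊤_ C) ⟶ c))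
    {F : Type w} [Category.{u} F]
    (gStar : (Cᵒᵖ ⥤ Type u) ⥤ F) (gLow : F ⥤ (Cᵒᵖ ⥤ Type u)) (adjG : gStar ⊣ gLow)
    [PreservesFiniteLimits gStar]
    (hindec : ∀ (c : C) (I : Type u), PreservesColimitsOfShape (Discrete I)
      (coyoneda.obj (Opposite.op (gStar.obj (yoneda.obj c))))) :
    ∀ I : Type u, PreservesColimitsOfShape (Discrete I) gLow := by
  intro I
  apply preservesColimitsOfShape_of_evaluation _ _
  intro k
  have e : gLow ⋙ (evaluation Cᵒᵖ (Type u)).obj k ≅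
      coyoneda.obj (Opposite.op (gStar.obj (yoneda.obj k.unop))) :=
    NatIso.ofComponents
      (fun X => (Equiv.toIso ((adjG.homEquiv _ X).trans yonedaEquiv)).symm)
      (by
        intro X Y f
        ext u
        simp [Equiv.toIso, yonedaEquiv]
        rw [← Adjunction.homEquiv_naturality_right_symm]
        congr 1
        ext d v
        exact (NatTrans.naturality_apply (gLow.map f) v.op u).symm)
  exact preservesColimitsOfShape_of_natIso e.symm
end

section
/- Let p : E → S be pre-cohesive. Every discrete object is weakly Kan: for every B in S, the object p* B of E is weakly Kan, i.e., for all A in S the canonical map κ : p_!((p* B)^{p* A}) → (p_!(p* B))^{p_!(p* A)} is an isomorphism; an explicit inverse is the composite (p_!(p*B))^{p_!(p*A)} → B^A → p_!(p*(B^A)) → p_!((p*B)^{p*A}) using τ, τ⁻¹, and p_!(κ^{p*}), where κ^{p*} : p*(B^A) → (p*B)^{p*A} is an isomorphism since p* is cartesian closed (inverse image of a geometric morphism / finite-limit preserving left exact with the relevant Frobenius property). -/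
open CategoryTheory Limits MonoidalCategory CartesianClosed

universe v u₁ u₂ u₃

variable (S : Type u₁) (E : Type u₂) [Category.{v} S] [Category.{v} E]

/-- A pre-cohesive string of adjoint functors `p_! ⊣ p^* ⊣ p_* ⊣ p^!` with `p^*`, `p^!`
fully faithful, `p_!` preserving finite products, and the Nullstellensatz
(the canonical `θ : p_* ⟶ p_!` is epi; since the unit of `p^* ⊣ p_*` is invertible this is
equivalent to `p_*σ` being epi, where `σ` is the unit of `p_! ⊣ p^*`). -/
structure PreCohesive where
  pShrek : E ⥤ S
  pStar : S ⥤ E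
  pLow : E ⥤ S
  pUpper : S ⥤ E
  adj₁ : pShrek ⊣ pStar
  adj₂ : pStar ⊣ pLow
  adj₃ : pLow ⊣ pUpper
  starFull : pStar.Full
  starFaithful : pStar.Faithful
  upperFull : pUpper.Full
  upperFaithful : pUpper.Faithful
  piecesPreservesFiniteProducts : PreservesFiniteProducts pShrek
  nullstellensatz : ∀ X : E, Epi (pLow.map (adj₁.unit.app X))

variable {S E}

/-- The canonical natural map `θ_X : p_* X ⟶ p_! X`. -/
noncomputable def PreCohesive.theta (P : PreCohesive S E) (X : E) :
    P.pLow.obj X ⟶ P.pShrek.obj X :=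
  letI := P.starFull
  letI := P.starFaithful
  P.pLow.map (P.adj₁.unit.app X) ≫ inv (P.adj₂.unit.app (P.pShrek.obj X))

/-- The inverse `τ⁻¹ : A ⟶ p_!(p^* A)` of the counit of `p_! ⊣ p^*`. -/
noncomputable def PreCohesive.tauInv (P : PreCohesive S E) (A : S) :
    A ⟶ P.pShrek.obj (P.pStar.obj A) :=
  letI := P.starFull
  letI := P.starFaithful
  inv (P.adj₁.counit.app A)

section CCC

variable [CartesianMonoidalCategory S] [CartesianMonoidalCategory E]
  [MonoidalClosed S] [MonoidalClosed E]

/-- The canonical comparison `κ^{p_!}_{A,B} : p_!(B^A) ⟶ (p_! B)^{(p_! A)}`. -/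
noncomputable def PreCohesive.kappa (P : PreCohesive S E) (A B : E) :
    P.pShrek.obj (A ⟹ B) ⟶ (P.pShrek.obj A ⟹ P.pShrek.obj B) :=
  letI := P.piecesPreservesFiniteProducts
  (expComparison P.pShrek A).natTrans.app B

/-- The canonical comparison `κ^{p^*}_{A,B} : p^*(B^A) ⟶ (p^* A ⟹ p^* B)` (`p^*` preserves
limits, being a right adjoint). -/
noncomputable def PreCohesive.kappaStar (P : PreCohesive S E) (A B : S) :
    P.pStar.obj (A ⟹ B) ⟶ (P.pStar.obj A ⟹ P.pStar.obj B) :=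
  letI := P.adj₁.rightAdjoint_preservesLimits
  (expComparison P.pStar A).natTrans.app B

/-- An object `X` is weakly Kan if `κ^{p_!}_{p^* A, X}` is invertible for every `A : S`. -/
def PreCohesive.WeaklyKan (P : PreCohesive S E) (X : E) : Prop :=
  ∀ A : S, IsIso (P.kappa (P.pStar.obj A) X)

/-- Evaluation of `I ⟹ X` at a point `i : 1 ⟶ I`. -/
noncomputable def evPt {I : E} (i : 𝟙_ E ⟶ I) (X : E) : (I ⟹ X) ⟶ X :=
  (λ_ (I ⟹ X)).inv ≫ (i ▷ (I ⟹ X)) ≫ (ihom.ev I).app X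

/-- A coequalizer fork in a category. -/
def IsCoeqFork {C : Type u₃} [Category.{v} C] {A B Q : C} (e₀ e₁ : A ⟶ B) (q : B ⟶ Q) : Prop :=
  (e₀ ≫ q = e₁ ≫ q) ∧ ∀ ⦃Z : C⦄ (h : B ⟶ Z), e₀ ≫ h = e₁ ≫ h → ∃! k : Q ⟶ Z, q ≫ k = h

/-- `0,1 : 1 ⟶ I` is a connector for the pre-cohesive `P` if for every `X` the fork
`p_*(X^I) ⇉ p_* X → p_! X` is a coequalizer. -/
def PreCohesive.Connector (P : PreCohesive S E) (I : E) (i₀ i₁ : 𝟙_ E ⟶ I) : Prop :=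
  ∀ X : E, IsCoeqFork (P.pLow.map (evPt i₀ X)) (P.pLow.map (evPt i₁ X)) (P.theta X)

end CCC


section Stmt12Aux

variable [CartesianMonoidalCategory S] [CartesianMonoidalCategory E]
  [MonoidalClosed S] [MonoidalClosed E]

private lemma stmt12_flip {C : Type u₃} [Category.{v} C] {X Y : C} (f : X ⟶ Y) (g : Y ⟶ X)
    [IsIso g] (h : f ≫ g = 𝟙 X) : g ≫ f = 𝟙 Y := by
  have e : f = inv g := by
    calc f = f ≫ g ≫ inv g := by simp
    _ = inv g := by rw [← Category.assoc, h, Category.id_comp]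
  rw [e, IsIso.hom_inv_id]

omit [MonoidalClosed S] [MonoidalClosed E] in
private lemma stmt12_counit_app_tensor {L : E ⥤ S} {R : S ⥤ E} (h : L ⊣ R)
    [PreservesLimitsOfShape (Discrete WalkingPair) L]
    [PreservesLimitsOfShape (Discrete WalkingPair) R] (X Y : S) :
    h.counit.app (X ⊗ Y) =
      L.map (CartesianMonoidalCategory.prodComparison R X Y) ≫
        CartesianMonoidalCategory.prodComparison L (R.obj X) (R.obj Y) ≫
        (h.counit.app X ⊗ₘ h.counit.app Y) := by
  apply CartesianMonoidalCategory.hom_ext <;>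
    simp [CartesianMonoidalCategory.prodComparison, ← L.map_comp_assoc]

private lemma stmt12_key {L : E ⥤ S} {R : S ⥤ E} (h : L ⊣ R)
    [PreservesLimitsOfShape (Discrete WalkingPair) L]
    [PreservesLimitsOfShape (Discrete WalkingPair) R] (A B : S) :
    L.map ((expComparison R A).natTrans.app B) ≫ (expComparison L (R.obj A)).natTrans.app (R.obj B) ≫
      (ihom (L.obj (R.obj A))).map (h.counit.app B) =
    h.counit.app (A ⟹ B) ≫ (MonoidalClosed.pre (h.counit.app A)).app B := by
  apply MonoidalClosed.uncurry_injective
  rw [← Category.assoc, MonoidalClosed.uncurry_natural_right, MonoidalClosed.uncurry_natural_left, uncurry_expComparison,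
    MonoidalClosed.uncurry_natural_left, MonoidalClosed.uncurry_pre (h.counit.app A) B]
  dsimp only [Functor.id_obj]
  rw [← tensorHom_def'_assoc]
  rw [Category.assoc, Category.assoc]
  erw [← CartesianMonoidalCategory.prodComparison_inv_natural_whiskerLeft_assoc (F := L)
    ((expComparison R A).natTrans.app B)]
  rw [← L.map_comp_assoc, expComparison_ev]
  rw [Functor.map_comp, Category.assoc]
  erw [h.counit_naturality]
  rw [stmt12_counit_app_tensor h A (A ⟹ B)]
  simp [← L.map_comp_assoc]

private lemma stmt12_kappaStar_isIso (P : PreCohesive S E) (A B : S) :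
    IsIso (P.kappaStar A B) := by
  letI := P.starFull; letI := P.starFaithful
  letI := P.adj₁.rightAdjoint_preservesLimits
  letI := P.piecesPreservesFiniteProducts
  letI : MonoidalClosedFunctor P.pStar :=
    cartesianClosedFunctorOfLeftAdjointPreservesBinaryProducts P.pStar P.adj₁
  have e : P.kappaStar A B = (expComparison P.pStar A).natTrans.app B := rfl
  rw [e]
  infer_instance

end Stmt12Aux

/-- for a pre-cohesive `p : E → S`, every discrete object `p^* B` is weakly
Kan; moreover `κ^{p^*}` is an isomorphism and the explicit composite
`(p_!(p^*B))^{p_!(p^*A)} ⟶ B^A ⟶ p_!(p^*(B^A)) ⟶ p_!((p^*B)^{p^*A})` (built from `τ`,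
`τ⁻¹` and `p_!(κ^{p^*})`) is a two-sided inverse of `κ^{p_!}_{p^*A, p^*B}`. -/
theorem stmt12 [CartesianMonoidalCategory S] [CartesianMonoidalCategory E]
    [MonoidalClosed S] [MonoidalClosed E]
    (P : PreCohesive S E) (B : S) :
    P.WeaklyKan (P.pStar.obj B) ∧
    ∀ A : S,
      IsIso (P.kappaStar A B) ∧
      P.kappa (P.pStar.obj A) (P.pStar.obj B) ≫
          ((ihom (P.pShrek.obj (P.pStar.obj A))).map (P.adj₁.counit.app B) ≫
            (MonoidalClosed.pre (P.tauInv A)).app B ≫ P.tauInv (A ⟹ B) ≫ P.pShrek.map (P.kappaStar A B)) =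
        𝟙 _ ∧
      ((ihom (P.pShrek.obj (P.pStar.obj A))).map (P.adj₁.counit.app B) ≫
          (MonoidalClosed.pre (P.tauInv A)).app B ≫ P.tauInv (A ⟹ B) ≫ P.pShrek.map (P.kappaStar A B)) ≫
        P.kappa (P.pStar.obj A) (P.pStar.obj B) = 𝟙 _ := by
  letI := P.starFull; letI := P.starFaithful
  letI := P.adj₁.rightAdjoint_preservesLimits
  letI := P.piecesPreservesFiniteProducts
  have hks : ∀ A : S, IsIso (P.kappaStar A B) := fun A => stmt12_kappaStar_isIso P A B
  have key' : ∀ A : S,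
      P.pShrek.map (P.kappaStar A B) ≫ P.kappa (P.pStar.obj A) (P.pStar.obj B) ≫
        (ihom (P.pShrek.obj (P.pStar.obj A))).map (P.adj₁.counit.app B) =
      P.adj₁.counit.app (A ⟹ B) ≫ (MonoidalClosed.pre (P.adj₁.counit.app A)).app B :=
    fun A => stmt12_key P.adj₁ A B
  have tauInv_eq : ∀ A : S, P.tauInv A = inv (P.adj₁.counit.app A) := fun A => rfl
  have hpre : ∀ A : S,
      (MonoidalClosed.pre (P.adj₁.counit.app A)).app B ≫ (MonoidalClosed.pre (P.tauInv A)).app B = 𝟙 _ := by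
    intro A
    rw [tauInv_eq, ← NatTrans.comp_app, ← MonoidalClosed.pre_map, IsIso.inv_hom_id]
    erw [MonoidalClosed.pre_id]
    rfl
  have hpre' : ∀ A : S,
      (MonoidalClosed.pre (P.tauInv A)).app B ≫ (MonoidalClosed.pre (P.adj₁.counit.app A)).app B = 𝟙 _ := by
    intro A
    rw [tauInv_eq, ← NatTrans.comp_app, ← MonoidalClosed.pre_map, IsIso.hom_inv_id]
    erw [MonoidalClosed.pre_id]
    rfl
  have h1 : ∀ A : S,
      P.kappa (P.pStar.obj A) (P.pStar.obj B) ≫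
        ((ihom (P.pShrek.obj (P.pStar.obj A))).map (P.adj₁.counit.app B) ≫
          (MonoidalClosed.pre (P.tauInv A)).app B ≫ P.tauInv (A ⟹ B) ≫ P.pShrek.map (P.kappaStar A B)) =
      𝟙 _ := by
    intro A
    haveI := hks A
    rw [← cancel_epi (P.pShrek.map (P.kappaStar A B)), Category.comp_id]
    rw [reassoc_of% (key' A)]
    rw [reassoc_of% (hpre A)]
    rw [tauInv_eq, IsIso.hom_inv_id_assoc]
  have h2 : ∀ A : S,
      ((ihom (P.pShrek.obj (P.pStar.obj A))).map (P.adj₁.counit.app B) ≫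
        (MonoidalClosed.pre (P.tauInv A)).app B ≫ P.tauInv (A ⟹ B) ≫ P.pShrek.map (P.kappaStar A B)) ≫
        P.kappa (P.pStar.obj A) (P.pStar.obj B) = 𝟙 _ := by
    intro A
    haveI := hks A
    haveI : IsIso ((MonoidalClosed.pre (P.tauInv A)).app B) := ⟨(MonoidalClosed.pre (P.adj₁.counit.app A)).app B, hpre' A, hpre A⟩
    haveI : IsIso (P.tauInv (A ⟹ B)) := by rw [tauInv_eq]; infer_instance
    haveI : IsIso ((ihom (P.pShrek.obj (P.pStar.obj A))).map (P.adj₁.counit.app B) ≫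
        (MonoidalClosed.pre (P.tauInv A)).app B ≫ P.tauInv (A ⟹ B) ≫ P.pShrek.map (P.kappaStar A B)) := by
      infer_instance
    exact stmt12_flip _ _ (h1 A)
  exact ⟨fun A => ⟨⟨_, h1 A, h2 A⟩⟩, fun A => ⟨hks A, h1 A, h2 A⟩⟩
end

section
/- Let p : E → S be pre-cohesive. If X and Y are weakly Kan objects of E, then X × Y is weakly Kan. Consequently the full subcategory of weakly Kan objects is closed under finite products (the terminal object being weakly Kan since it is discrete). -/
open CategoryTheory Limits MonoidalCategory CartesianClosed

universe v u₁ u₂ u₃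

variable (S : Type u₁) (E : Type u₂) [Category.{v} S] [Category.{v} E]

variable {S E}

section Aux

variable {C : Type u₁} {D : Type u₂} [Category.{v} C] [Category.{v} D]
  [CartesianMonoidalCategory C] [CartesianMonoidalCategory D]

open CartesianMonoidalCategory in
lemma natTrans_app_tensor_isIso {F G : C ⥤ D} (α : F ⟶ G) (X Y : C)
    [IsIso (α.app X)] [IsIso (α.app Y)]
    [IsIso (CartesianMonoidalCategory.prodComparison F X Y)]
    [IsIso (CartesianMonoidalCategory.prodComparison G X Y)] :
    IsIso (α.app (X ⊗ Y)) := by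
  have hsq : α.app (X ⊗ Y) ≫ CartesianMonoidalCategory.prodComparison G X Y
      = CartesianMonoidalCategory.prodComparison F X Y ≫ (α.app X ⊗ₘ α.app Y) := by
    apply CartesianMonoidalCategory.hom_ext
    · rw [Category.assoc, CartesianMonoidalCategory.prodComparison_fst, ← α.naturality,
        Category.assoc, tensorHom_fst, CartesianMonoidalCategory.prodComparison_fst_assoc]
    · rw [Category.assoc, CartesianMonoidalCategory.prodComparison_snd, ← α.naturality,
        Category.assoc, tensorHom_snd, CartesianMonoidalCategory.prodComparison_snd_assoc]
  have : α.app (X ⊗ Y)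
      = CartesianMonoidalCategory.prodComparison F X Y ≫ (α.app X ⊗ₘ α.app Y)
          ≫ inv (CartesianMonoidalCategory.prodComparison G X Y) := by
    rw [← Category.assoc, ← hsq]; simp
  rw [this]; infer_instance

open CartesianMonoidalCategory in
lemma natTrans_app_unit_isIso {F G : C ⥤ D} (α : F ⟶ G)
    [IsIso (CartesianMonoidalCategory.terminalComparison F)]
    [IsIso (CartesianMonoidalCategory.terminalComparison G)] :
    IsIso (α.app (𝟙_ C)) := by
  have : α.app (𝟙_ C) = CartesianMonoidalCategory.terminalComparison F
      ≫ inv (CartesianMonoidalCategory.terminalComparison G) := by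
    rw [IsIso.eq_comp_inv]; exact toUnit_unique _ _
  rw [this]; infer_instance

end Aux

/-- for a pre-cohesive `p : E → S`, the weakly Kan objects are closed under
finite products: if `X` and `Y` are weakly Kan then so is `X × Y`, and the terminal object
is weakly Kan (being discrete). -/
theorem stmt13 [CartesianMonoidalCategory S] [CartesianMonoidalCategory E]
    [MonoidalClosed S] [MonoidalClosed E]
    (P : PreCohesive S E) :
    (∀ X Y : E, P.WeaklyKan X → P.WeaklyKan Y → P.WeaklyKan (X ⊗ Y)) ∧
      P.WeaklyKan (𝟙_ E) := by
  letI := P.piecesPreservesFiniteProducts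
  constructor
  · intro X Y hX hY A
    haveI : IsIso ((expComparison P.pShrek (P.pStar.obj A)).natTrans.app X) := hX A
    haveI : IsIso ((expComparison P.pShrek (P.pStar.obj A)).natTrans.app Y) := hY A
    letI : Limits.PreservesLimits (ihom (P.pStar.obj A)) :=
      (ihom.adjunction (P.pStar.obj A)).rightAdjoint_preservesLimits
    letI : Limits.PreservesLimits (ihom (P.pShrek.obj (P.pStar.obj A))) :=
      (ihom.adjunction (P.pShrek.obj (P.pStar.obj A))).rightAdjoint_preservesLimits
    exact natTrans_app_tensor_isIso (expComparison P.pShrek (P.pStar.obj A)).natTrans X Y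
  · intro A
    letI : Limits.PreservesLimits (ihom (P.pStar.obj A)) :=
      (ihom.adjunction (P.pStar.obj A)).rightAdjoint_preservesLimits
    letI : Limits.PreservesLimits (ihom (P.pShrek.obj (P.pStar.obj A))) :=
      (ihom.adjunction (P.pShrek.obj (P.pStar.obj A))).rightAdjoint_preservesLimits
    exact natTrans_app_unit_isIso (expComparison P.pShrek (P.pStar.obj A)).natTrans
end

section
/- Let p : E → S be pre-cohesive. If X in E is weakly Kan then for every A in S, the exponential X^{p* A} is weakly Kan. -/
open CategoryTheory Limits MonoidalCategory CartesianClosed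

universe v u₁ u₂ u₃

variable (S : Type u₁) (E : Type u₂) [Category.{v} S] [Category.{v} E]

variable {S E}

noncomputable section Aux


variable {C : Type u₁} {D : Type u₂} [Category.{v} C] [Category.{v} D]
  [CartesianMonoidalCategory C] [CartesianMonoidalCategory D]
  [MonoidalClosed C] [MonoidalClosed D]
  (F : C ⥤ D) [PreservesLimitsOfShape (Discrete WalkingPair) F]

/-- the iso `tensorLeft (F (A⊗B)) ⟶ tensorLeft (F B) ⋙ tensorLeft (F A)` downstairs -/
def deltaSq (A B : C) : tensorLeft (F.obj (A ⊗ B)) ⟶ tensorLeft (F.obj B) ⋙ tensorLeft (F.obj A) :=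
  (curriedTensor D).map (CartesianMonoidalCategory.prodComparison F A B) ≫
    (tensorLeftTensor (F.obj A) (F.obj B)).hom

instance (A B : C) : IsIso (deltaSq F A B) := by
  unfold deltaSq
  infer_instance

theorem prodComparison_assoc (A B X : C) :
    F.map (α_ A B X).hom ≫ CartesianMonoidalCategory.prodComparison F A (B ⊗ X) ≫
        (F.obj A ◁ CartesianMonoidalCategory.prodComparison F B X) =
      CartesianMonoidalCategory.prodComparison F (A ⊗ B) X ≫
        (CartesianMonoidalCategory.prodComparison F A B ▷ F.obj X) ≫ (α_ _ _ _).hom := by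
  apply CartesianMonoidalCategory.hom_ext
  · simp only [Category.assoc, CartesianMonoidalCategory.whiskerLeft_fst,
      CartesianMonoidalCategory.prodComparison_fst, CartesianMonoidalCategory.associator_hom_fst,
      CartesianMonoidalCategory.whiskerRight_fst_assoc, CartesianMonoidalCategory.whiskerRight_fst,
      CartesianMonoidalCategory.prodComparison_fst_assoc, ← Functor.map_comp,
      CartesianMonoidalCategory.associator_hom_fst_assoc]
  · apply CartesianMonoidalCategory.hom_ext <;>
      simp only [Category.assoc, CartesianMonoidalCategory.whiskerLeft_snd_assoc,
        CartesianMonoidalCategory.whiskerRight_fst_assoc, CartesianMonoidalCategory.whiskerRight_fst,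
        CartesianMonoidalCategory.whiskerLeft_fst, CartesianMonoidalCategory.whiskerLeft_snd,
        CartesianMonoidalCategory.prodComparison_snd, CartesianMonoidalCategory.prodComparison_snd_assoc,
        CartesianMonoidalCategory.prodComparison_fst, CartesianMonoidalCategory.prodComparison_fst_assoc,
        CartesianMonoidalCategory.associator_hom_snd_fst_assoc,
        CartesianMonoidalCategory.associator_hom_snd_snd_assoc,
        CartesianMonoidalCategory.associator_hom_snd_fst, CartesianMonoidalCategory.associator_hom_snd_snd,
        CartesianMonoidalCategory.whiskerRight_snd_assoc, CartesianMonoidalCategory.whiskerRight_snd,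
        ← Functor.map_comp]

theorem aux_square (A B : C) :
    ((TwoSquare.vComp (CartesianMonoidalCategory.prodComparisonNatIso F B).inv
        (CartesianMonoidalCategory.prodComparisonNatIso F A).inv).whiskerLeft
        (tensorLeftTensor A B).inv).whiskerRight (deltaSq F A B) =
      ((CartesianMonoidalCategory.prodComparisonNatIso F (A ⊗ B)).inv) := by
  apply TwoSquare.ext
  intro X
  simp only [TwoSquare.whiskerRight, TwoSquare.whiskerLeft, TwoSquare.vComp, NatTrans.comp_app,
    Functor.whiskerLeft_app, Functor.whiskerRight_app, deltaSq,
    CartesianMonoidalCategory.prodComparisonNatIso_inv,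
    NatIso.isIso_inv_app, CartesianMonoidalCategory.prodComparisonNatTrans_app,
    tensorLeftTensor_hom_app, tensorLeftTensor_inv_app, Functor.associator_hom_app,
    Functor.associator_inv_app, Category.id_comp, Category.comp_id,
    Functor.comp_obj, curriedTensor_map_app]
  symm
  apply IsIso.inv_eq_of_hom_inv_id
  have h := prodComparison_assoc F A B X
  rw [← IsIso.inv_comp_eq] at h
  rw [← h]
  simp only [Category.assoc, curriedTensor_obj_map, IsIso.hom_inv_id_assoc]
  rw [← MonoidalCategory.whiskerLeft_comp_assoc]
  simp


theorem expComparison_tensor (A B : C) :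
    expComparison F (A ⊗ B) =
      ((TwoSquare.hComp (expComparison F A) (expComparison F B)).whiskerTop
        (conjugateEquiv (ihom.adjunction (A ⊗ B))
          ((ihom.adjunction B).comp (ihom.adjunction A)) (tensorLeftTensor A B).inv)).whiskerBottom
        (conjugateEquiv ((ihom.adjunction (F.obj B)).comp (ihom.adjunction (F.obj A)))
            (ihom.adjunction (F.obj (A ⊗ B))) (deltaSq F A B)) := by
  have h1 := mateEquiv_hcomp (ihom.adjunction B) (ihom.adjunction (F.obj B))
    (ihom.adjunction A) (ihom.adjunction (F.obj A))
    ((CartesianMonoidalCategory.prodComparisonNatIso F B).inv)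
    ((CartesianMonoidalCategory.prodComparisonNatIso F A).inv)
  have h2 := conjugateEquiv_mateEquiv_vcomp (ihom.adjunction (A ⊗ B))
    ((ihom.adjunction B).comp (ihom.adjunction A))
    ((ihom.adjunction (F.obj B)).comp (ihom.adjunction (F.obj A)))
    ((tensorLeftTensor A B).inv)
    (TwoSquare.vComp (CartesianMonoidalCategory.prodComparisonNatIso F B).inv
      (CartesianMonoidalCategory.prodComparisonNatIso F A).inv)
  have h3 := mateEquiv_conjugateEquiv_vcomp (ihom.adjunction (A ⊗ B))
    ((ihom.adjunction (F.obj B)).comp (ihom.adjunction (F.obj A)))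
    (ihom.adjunction (F.obj (A ⊗ B)))
    ((TwoSquare.vComp (CartesianMonoidalCategory.prodComparisonNatIso F B).inv
      (CartesianMonoidalCategory.prodComparisonNatIso F A).inv).whiskerLeft
        (tensorLeftTensor A B).inv)
    (deltaSq F A B)
  unfold expComparison
  rw [← aux_square F A B, h3, h2, h1]


instance pre_isIso {A A' : C} (f : A' ⟶ A) [IsIso f] : IsIso (MonoidalClosed.pre f) := by
  refine ⟨MonoidalClosed.pre (inv f), ?_, ?_⟩
  · rw [← MonoidalClosed.pre_map, IsIso.inv_hom_id, MonoidalClosed.pre_id]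
  · rw [← MonoidalClosed.pre_map, IsIso.hom_inv_id, MonoidalClosed.pre_id]

/-- transport `IsIso` of the exponential comparison along an iso of exponents -/
theorem isIso_expComparison_app_of_iso {A A' : C} (f : A' ⟶ A) [IsIso f] (X : C)
    (h : IsIso ((expComparison F A').natTrans.app X)) :
    IsIso ((expComparison F A).natTrans.app X) := by
  have hw : (expComparison F A).natTrans.app X ≫ (MonoidalClosed.pre (F.map f)).app (F.obj X) =
      F.map ((MonoidalClosed.pre f).app X) ≫ (expComparison F A').natTrans.app X :=
    congr_arg (fun w => NatTrans.app (TwoSquare.natTrans w) X) (expComparison_whiskerLeft F f)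
  have h1 : IsIso ((MonoidalClosed.pre (F.map f)).app (F.obj X)) := inferInstance
  have h2 : IsIso ((MonoidalClosed.pre f).app X) := inferInstance
  have : IsIso ((expComparison F A).natTrans.app X ≫
      (MonoidalClosed.pre (F.map f)).app (F.obj X)) := by
    rw [hw]; exact IsIso.comp_isIso' (inferInstance) h
  exact IsIso.of_isIso_comp_right _ ((MonoidalClosed.pre (F.map f)).app (F.obj X))

/-- the key step: if the exponential comparison at `A ⊗ B` and at `A` (for `X`) are isos, then
the comparison at `B` for `A ⟹ X` is an iso. -/
theorem isIso_expComparison_app_exp (A B X : C)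
    (hAB : IsIso ((expComparison F (A ⊗ B)).natTrans.app X))
    (hA : IsIso ((expComparison F A).natTrans.app X)) :
    IsIso ((expComparison F B).natTrans.app (A ⟹ X)) := by
  have hfac := congr_arg (fun w => NatTrans.app (TwoSquare.natTrans w) X)
    (expComparison_tensor F A B)
  simp only [TwoSquare.whiskerBottom, TwoSquare.whiskerTop, TwoSquare.hComp, NatTrans.comp_app,
    Functor.whiskerLeft_app, Functor.whiskerRight_app, Functor.associator_hom_app,
    Functor.associator_inv_app, Category.id_comp, Category.comp_id, Functor.comp_obj] at hfac
  set c₁ := conjugateEquiv (ihom.adjunction (A ⊗ B))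
    ((ihom.adjunction B).comp (ihom.adjunction A)) (tensorLeftTensor A B).inv with hc₁
  set c₂ := conjugateEquiv ((ihom.adjunction (F.obj B)).comp (ihom.adjunction (F.obj A)))
    (ihom.adjunction (F.obj (A ⊗ B))) (deltaSq F A B) with hc₂
  have hic₁ : IsIso c₁ := by
    rw [hc₁, show conjugateEquiv (ihom.adjunction (A ⊗ B))
        ((ihom.adjunction B).comp (ihom.adjunction A)) (tensorLeftTensor A B).inv =
      (conjugateIsoEquiv (ihom.adjunction (A ⊗ B))
        ((ihom.adjunction B).comp (ihom.adjunction A)) (tensorLeftTensor A B).symm).hom from rfl]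
    infer_instance
  have hic₂ : IsIso c₂ := by
    rw [hc₂, show conjugateEquiv ((ihom.adjunction (F.obj B)).comp (ihom.adjunction (F.obj A)))
        (ihom.adjunction (F.obj (A ⊗ B))) (deltaSq F A B) =
      (conjugateIsoEquiv ((ihom.adjunction (F.obj B)).comp (ihom.adjunction (F.obj A)))
        (ihom.adjunction (F.obj (A ⊗ B))) (asIso (deltaSq F A B))).hom from rfl]
    infer_instance
  have e1 : IsIso (F.map (c₁.app X)) := inferInstance
  have e2 : IsIso ((ihom (F.obj B)).map ((expComparison F A).natTrans.app X)) := inferInstance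
  have e3 : IsIso (c₂.app (F.obj X)) := inferInstance
  have : IsIso ((expComparison F B).natTrans.app ((ihom A).obj X) ≫
      (ihom (F.obj B)).map ((expComparison F A).natTrans.app X) ≫ c₂.app (F.obj X)) := by
    have : IsIso (F.map (c₁.app X) ≫ (expComparison F B).natTrans.app ((ihom A).obj X) ≫
        (ihom (F.obj B)).map ((expComparison F A).natTrans.app X) ≫ c₂.app (F.obj X)) := by
      rw [Category.assoc, Category.assoc] at hfac; rw [← hfac]; exact hAB
    exact IsIso.of_isIso_comp_left (F.map (c₁.app X)) _
  have := IsIso.of_isIso_comp_right ((expComparison F B).natTrans.app ((ihom A).obj X))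
    ((ihom (F.obj B)).map ((expComparison F A).natTrans.app X) ≫ c₂.app (F.obj X))
  exact this

end Aux

/-- for a pre-cohesive `p : E → S`, if `X` is weakly Kan then so is the
exponential `X^{p^* A}` for every `A : S`. -/
theorem stmt14 [CartesianMonoidalCategory S] [CartesianMonoidalCategory E]
    [MonoidalClosed S] [MonoidalClosed E]
    (P : PreCohesive S E) (X : E) (hX : P.WeaklyKan X) :
    ∀ A : S, P.WeaklyKan (P.pStar.obj A ⟹ X) := by
  intro A B
  letI := P.piecesPreservesFiniteProducts
  haveI : PreservesLimitsOfShape (Discrete WalkingPair) P.pShrek := inferInstance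
  haveI := P.adj₁.rightAdjoint_preservesLimits
  haveI : IsIso (CartesianMonoidalCategory.prodComparison P.pStar A B) := inferInstance
  have hAB : IsIso ((expComparison P.pShrek (P.pStar.obj A ⊗ P.pStar.obj B)).natTrans.app X) := by
    refine isIso_expComparison_app_of_iso P.pShrek
      (CartesianMonoidalCategory.prodComparison P.pStar A B) X ?_
    exact hX (A ⊗ B)
  have hA : IsIso ((expComparison P.pShrek (P.pStar.obj A)).natTrans.app X) := hX A
  exact isIso_expComparison_app_exp P.pShrek _ _ X hAB hA
end
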